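/- arXiv:2108.06673 — 5 statements merged into one kernel-verified Lean document; each statement's English description precedes it below -/
import Mathlib

section
/- Let (I,(·,·)) be a Cartan datum and σ an admissible diagram automorphism of it. Then the induced pair on the set of σ-orbits is again a Cartan datum: for every σ-orbit η, (α_η,α_η)_1 is a positive even integer, and for every pair of distinct σ-orbits η ≠ η' the number a_{ηη'} := 2(α_η,α_{η'})_1/(α_η,α_η)_1 is a nonpositive integer; moreover, for any fixed i ∈ η one has a_{ηη'} = Σ_{j∈η'} a_{ij}. -/
/-!
Invariance of the form under `σ` makes the row sum `∑_{j ∈ η'} (α_a, α_j)` the same for every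
`a` in the orbit `η` of `i`, so `(α_η, α_{η'})_1 = |η| · ∑_{j ∈ η'} (α_i, α_j)`. Dividing by
`(α_η, α_η)_1 = |η| · (α_i, α_i)` cancels `|η|`, leaving `a_{ηη'} = ∑_{j ∈ η'} a_{ij}`, a sum of
nonpositive integers because no `j ∈ η'` equals `i`.
-/

noncomputable section

open Finset

/-- The `σ`-orbit of `i`, as a `Finset`. -/
def orbitF {I : Type} [Fintype I] [DecidableEq I] (σ : Equiv.Perm I) (i : I) : Finset I :=
  Finset.univ.filter (fun j => σ.SameCycle i j)

theorem Equiv.Perm.invariant₂_zpow {α β : Type*} {σ : Equiv.Perm α} {f : α → α → β}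
    (hf : ∀ i j, f (σ i) (σ j) = f i j) (k : ℤ) (i j : α) :
    f ((σ ^ k) i) ((σ ^ k) j) = f i j := by
  induction k using Int.induction_on generalizing i j with
  | zero => rfl
  | succ n ih => rw [zpow_add_one, mul_apply, mul_apply, ih, hf]
  | pred n ih =>
    rw [zpow_sub_one, mul_apply, mul_apply, ih, ← hf, coe_inv, apply_symm_apply, apply_symm_apply]

section Orbit

variable {I : Type} {M : Type*} [Fintype I] [DecidableEq I] [AddCommMonoid M] (σ : Equiv.Perm I)

@[simp]
theorem mem_orbitF {i j : I} : j ∈ orbitF σ i ↔ σ.SameCycle i j := by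
  simp [orbitF]

theorem card_orbitF_pos (i : I) : 0 < (orbitF σ i).card :=
  card_pos.2 ⟨i, (mem_orbitF σ).2 (Equiv.Perm.SameCycle.refl σ i)⟩

variable {σ} {f : I → I → M}

theorem sum_orbitF_zpow_left (hf : ∀ i j, f (σ i) (σ j) = f i j) (k : ℤ) (a i' : I) :
    ∑ b ∈ orbitF σ i', f ((σ ^ k) a) b = ∑ b ∈ orbitF σ i', f a b :=
  (sum_equiv (σ ^ k) (fun _ => by simp [Equiv.Perm.sameCycle_zpow_right])
    (fun b _ => (Equiv.Perm.invariant₂_zpow hf k a b).symm)).symm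

theorem sum_orbitF_orbitF (hf : ∀ i j, f (σ i) (σ j) = f i j) (i i' : I) :
    ∑ a ∈ orbitF σ i, ∑ b ∈ orbitF σ i', f a b =
      (orbitF σ i).card • ∑ b ∈ orbitF σ i', f i b := by
  rw [← sum_const]
  refine sum_congr rfl fun a ha => ?_
  obtain ⟨k, rfl⟩ := (mem_orbitF σ).1 ha
  exact sum_orbitF_zpow_left hf k i i'

end Orbit

theorem stmt0_general {I : Type} [Fintype I] [DecidableEq I]
    (form : I → I → ℤ)
    (hdiag_pos : ∀ i, 0 < form i i) (hdiag_even : ∀ i, 2 ∣ form i i)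
    (hoff : ∀ i j, i ≠ j → 2 * form i j ≤ 0 ∧ form i i ∣ 2 * form i j)
    (σ : Equiv.Perm I)
    (hform : ∀ i j, form (σ i) (σ j) = form i j) :
    -- (α_η,α_η)_1 is a positive even integer
    (∀ i : I, 0 < (orbitF σ i).card * form i i ∧ 2 ∣ (orbitF σ i).card * form i i) ∧
    -- for η ≠ η', a_{ηη'} = 2(α_η,α_{η'})_1/(α_η,α_η)_1 is a nonpositive integer,
    -- and for fixed i ∈ η it equals Σ_{j∈η'} a_{ij}
    (∀ i i' : I, ¬ σ.SameCycle i i' →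
      2 * (∑ a ∈ orbitF σ i, ∑ b ∈ orbitF σ i', form a b) ≤ 0 ∧
      ((orbitF σ i).card * form i i) ∣
        2 * (∑ a ∈ orbitF σ i, ∑ b ∈ orbitF σ i', form a b) ∧
      2 * (∑ a ∈ orbitF σ i, ∑ b ∈ orbitF σ i', form a b) /
          ((orbitF σ i).card * form i i) =
        ∑ j ∈ orbitF σ i', 2 * form i j / form i i) := by
  have hcard (i : I) : (0 : ℤ) < (orbitF σ i).card := by exact_mod_cast card_orbitF_pos σ i
  refine ⟨fun i => ⟨mul_pos (hcard i) (hdiag_pos i), (hdiag_even i).mul_left _⟩,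
    fun i i' hii' => ?_⟩
  have hrow : ∀ j ∈ orbitF σ i', 2 * form i j ≤ 0 ∧ form i i ∣ 2 * form i j := fun j hj =>
    hoff i j (by rintro rfl; exact hii' ((mem_orbitF σ).1 hj).symm)
  have hsum : 2 * ∑ a ∈ orbitF σ i, ∑ b ∈ orbitF σ i', form a b =
      (orbitF σ i).card * ∑ j ∈ orbitF σ i', 2 * form i j := by
    rw [sum_orbitF_orbitF hform, nsmul_eq_mul, ← mul_sum, mul_left_comm]
  rw [hsum]
  refine ⟨mul_nonpos_of_nonneg_of_nonpos (hcard i).le (sum_nonpos fun j hj => (hrow j hj).1),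
    mul_dvd_mul_left _ (dvd_sum fun j hj => (hrow j hj).2), ?_⟩
  rw [Int.mul_ediv_mul_of_pos _ _ (hcard i), Int.sum_div fun j hj => (hrow j hj).2]

/-- for a Cartan datum `(I,(·,·))` with an admissible diagram automorphism
`σ`, the induced pair on the set of `σ`-orbits is again a Cartan datum: for every orbit
`η` (the orbit of `i`), `(α_η,α_η)_1 = |η|·(α_i,α_i)` is a positive even integer; for
distinct orbits `η ≠ η'` the number `a_{ηη'} = 2(α_η,α_{η'})_1/(α_η,α_η)_1` is a
nonpositive integer; and for any fixed `i ∈ η`, `a_{ηη'} = Σ_{j∈η'} a_{ij}`. -/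
theorem stmt0 {I : Type} [Fintype I] [DecidableEq I] [Nonempty I]
    (form : I → I → ℤ)
    (hsymm : ∀ i j, form i j = form j i)
    (hdiag_pos : ∀ i, 0 < form i i) (hdiag_even : ∀ i, 2 ∣ form i i)
    (hoff : ∀ i j, i ≠ j → 2 * form i j ≤ 0 ∧ form i i ∣ 2 * form i j)
    (σ : Equiv.Perm I)
    (hform : ∀ i j, form (σ i) (σ j) = form i j)
    (hadm : ∀ i j, i ≠ j → σ.SameCycle i j → form i j = 0) :
    -- (α_η,α_η)_1 is a positive even integer
    (∀ i : I, 0 < (orbitF σ i).card * form i i ∧ 2 ∣ (orbitF σ i).card * form i i) ∧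
    -- for η ≠ η', a_{ηη'} = 2(α_η,α_{η'})_1/(α_η,α_η)_1 is a nonpositive integer,
    -- and for fixed i ∈ η it equals Σ_{j∈η'} a_{ij}
    (∀ i i' : I, ¬ σ.SameCycle i i' →
      2 * (∑ a ∈ orbitF σ i, ∑ b ∈ orbitF σ i', form a b) ≤ 0 ∧
      ((orbitF σ i).card * form i i) ∣
        2 * (∑ a ∈ orbitF σ i, ∑ b ∈ orbitF σ i', form a b) ∧
      2 * (∑ a ∈ orbitF σ i, ∑ b ∈ orbitF σ i', form a b) /
          ((orbitF σ i).card * form i i) =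
        ∑ j ∈ orbitF σ i', 2 * form i j / form i i) :=
  stmt0_general form hdiag_pos hdiag_even hoff σ hform
end
end

section
/- Let (I,(·,·)) be a Cartan datum, σ an admissible diagram automorphism of it, and m ≥ 1 an integer; set τ = σ^m. Then: (i) τ is an admissible diagram automorphism of (I,(·,·)); (ii) σ maps each τ-orbit onto a τ-orbit, hence induces a permutation σ̄ of the set I^τ of τ-orbits; and (iii) σ̄ is an admissible diagram automorphism of the induced Cartan datum X^τ = (I^τ, (·,·)_τ) (i.e. σ̄ preserves the induced form (·,·)_τ, and (α_γ,α_{γ'})_τ = 0 for distinct τ-orbits γ ≠ γ' lying in a common σ̄-orbit). -/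
noncomputable section

open Finset

/-- The induced form `(·,·)_τ` on `τ`-orbits, evaluated on the orbits of `i` and `j`:
`(α_γ,α_γ)_τ = |γ|·(α_i,α_i)` for `γ = γ'`, and
`(α_γ,α_{γ'})_τ = Σ_{a∈γ, b∈γ'} (α_a,α_b)` for `γ ≠ γ'`. -/
def inducedForm {I : Type} [Fintype I] [DecidableEq I] (form : I → I → ℤ)
    (τ : Equiv.Perm I) (i j : I) : ℤ :=
  if τ.SameCycle i j then (orbitF τ i).card * form i i
  else ∑ a ∈ orbitF τ i, ∑ b ∈ orbitF τ j, form a b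

/-!
Everything follows from two facts: `σ` commutes with `τ = σ ^ m`, so it carries `τ`-orbits
to `τ`-orbits and, preserving the form, preserves the sums defining the induced form; and every
`τ`-orbit lies inside a `σ`-orbit, so admissibility of `σ` passes to `τ` and kills every
pairing between distinct `τ`-orbits inside one `σ`-orbit.
-/

namespace Equiv.Perm

variable {I : Type} {f g : Equiv.Perm I} {x y : I}

theorem sameCycle_apply_apply_iff_of_commute (h : Commute g f) :
    f.SameCycle (g x) (g y) ↔ f.SameCycle x y := by
  simpa [h.mul_inv_cancel] using sameCycle_conj (g := g) (f := f) (x := g x) (y := g y)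

end Equiv.Perm

theorem form_pow_apply {I : Type} {form : I → I → ℤ} {σ : Equiv.Perm I}
    (hform : ∀ i j, form (σ i) (σ j) = form i j) (n : ℕ) (i j : I) :
    form ((σ ^ n) i) ((σ ^ n) j) = form i j := by
  induction n generalizing i j with
  | zero => rfl
  | succ n ih => rw [pow_succ, Equiv.Perm.mul_apply, Equiv.Perm.mul_apply, ih, hform]

section InducedForm

variable {I : Type} [Fintype I] [DecidableEq I] {form : I → I → ℤ} {σ τ : Equiv.Perm I}

theorem mem_orbitF_s1 {i x : I} : x ∈ orbitF τ i ↔ τ.SameCycle i x := by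
  simp [orbitF]

theorem image_orbitF_of_commute (h : Commute σ τ) (i : I) :
    (orbitF τ i).image σ = orbitF τ (σ i) := by
  ext x
  simp only [mem_image, mem_orbitF_s1]
  constructor
  · rintro ⟨y, hy, rfl⟩
    exact (Equiv.Perm.sameCycle_apply_apply_iff_of_commute h).mpr hy
  · intro hx
    obtain ⟨y, rfl⟩ := σ.surjective x
    exact ⟨y, (Equiv.Perm.sameCycle_apply_apply_iff_of_commute h).mp hx, rfl⟩

theorem inducedForm_apply_apply_of_commute (hform : ∀ i j, form (σ i) (σ j) = form i j)
    (h : Commute σ τ) (i j : I) :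
    inducedForm form τ (σ i) (σ j) = inducedForm form τ i j := by
  unfold inducedForm
  simp only [Equiv.Perm.sameCycle_apply_apply_iff_of_commute h, ← image_orbitF_of_commute h,
    card_image_of_injective _ σ.injective, sum_image σ.injective.injOn, hform]

theorem inducedForm_eq_zero_of_sameCycle (hadm : ∀ i j, i ≠ j → σ.SameCycle i j → form i j = 0)
    (n : ℕ) {i j : I} (hτ : ¬ (σ ^ n).SameCycle i j) (hσ : σ.SameCycle i j) :
    inducedForm form (σ ^ n) i j = 0 := by
  rw [inducedForm, if_neg hτ]
  refine sum_eq_zero fun a ha => sum_eq_zero fun b hb => ?_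
  rw [mem_orbitF_s1] at ha hb
  refine hadm a b ?_ (ha.of_pow.symm.trans (hσ.trans hb.of_pow))
  rintro rfl
  exact hτ (ha.trans hb.symm)

end InducedForm

theorem stmt1_general {I : Type} [Fintype I] [DecidableEq I]
    (form : I → I → ℤ)
    (σ : Equiv.Perm I)
    (hform : ∀ i j, form (σ i) (σ j) = form i j)
    (hadm : ∀ i j, i ≠ j → σ.SameCycle i j → form i j = 0)
    (m : ℕ) :
    -- (i) τ = σ^m is an admissible diagram automorphism
    (∀ i j, form ((σ ^ m) i) ((σ ^ m) j) = form i j) ∧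
    (∀ i j, i ≠ j → (σ ^ m).SameCycle i j → form i j = 0) ∧
    -- (ii) σ maps each τ-orbit onto a τ-orbit (hence induces a permutation σ̄ of I^τ)
    (∀ i, (orbitF (σ ^ m) i).image σ = orbitF (σ ^ m) (σ i)) ∧
    -- (iii) σ̄ preserves the induced form (·,·)_τ ...
    (∀ i j, inducedForm form (σ ^ m) (σ i) (σ j) = inducedForm form (σ ^ m) i j) ∧
    -- ... and is admissible: distinct τ-orbits in a common σ̄-orbit pair to 0
    (∀ i j, ¬ (σ ^ m).SameCycle i j →
      (∃ nz : ℤ, (σ ^ m).SameCycle ((σ ^ nz) i) j) →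
      inducedForm form (σ ^ m) i j = 0) := by
  have hcomm : Commute σ (σ ^ m) := Commute.self_pow σ m
  refine ⟨form_pow_apply hform m, fun i j hij h => hadm i j hij h.of_pow,
    image_orbitF_of_commute hcomm, inducedForm_apply_apply_of_commute hform hcomm, ?_⟩
  rintro i j hτ ⟨k, hk⟩
  exact inducedForm_eq_zero_of_sameCycle hadm m hτ
    (Equiv.Perm.sameCycle_zpow_left.mp hk.of_pow)

/-- for a Cartan datum `(I,(·,·))` with an admissible diagram automorphism
`σ` and `m ≥ 1`, setting `τ = σ^m`: (i) `τ` is an admissible diagram automorphism;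
(ii) `σ` maps each `τ`-orbit onto a `τ`-orbit, hence induces a permutation `σ̄` of the
set of `τ`-orbits; (iii) `σ̄` is an admissible diagram automorphism of the induced
Cartan datum `X^τ`: it preserves the induced form `(·,·)_τ`, and `(α_γ,α_{γ'})_τ = 0`
for distinct `τ`-orbits `γ ≠ γ'` in a common `σ̄`-orbit. -/
theorem stmt1 {I : Type} [Fintype I] [DecidableEq I] [Nonempty I]
    (form : I → I → ℤ)
    (hsymm : ∀ i j, form i j = form j i)
    (hdiag_pos : ∀ i, 0 < form i i) (hdiag_even : ∀ i, 2 ∣ form i i)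
    (hoff : ∀ i j, i ≠ j → 2 * form i j ≤ 0 ∧ form i i ∣ 2 * form i j)
    (σ : Equiv.Perm I)
    (hform : ∀ i j, form (σ i) (σ j) = form i j)
    (hadm : ∀ i j, i ≠ j → σ.SameCycle i j → form i j = 0)
    (m : ℕ) (hm : 1 ≤ m) :
    -- (i) τ = σ^m is an admissible diagram automorphism
    (∀ i j, form ((σ ^ m) i) ((σ ^ m) j) = form i j) ∧
    (∀ i j, i ≠ j → (σ ^ m).SameCycle i j → form i j = 0) ∧
    -- (ii) σ maps each τ-orbit onto a τ-orbit (hence induces a permutation σ̄ of I^τ)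
    (∀ i, (orbitF (σ ^ m) i).image σ = orbitF (σ ^ m) (σ i)) ∧
    -- (iii) σ̄ preserves the induced form (·,·)_τ ...
    (∀ i j, inducedForm form (σ ^ m) (σ i) (σ j) = inducedForm form (σ ^ m) i j) ∧
    -- ... and is admissible: distinct τ-orbits in a common σ̄-orbit pair to 0
    (∀ i j, ¬ (σ ^ m).SameCycle i j →
      (∃ nz : ℤ, (σ ^ m).SameCycle ((σ ^ nz) i) j) →
      inducedForm form (σ ^ m) i j = 0) :=
  stmt1_general form σ hform hadm m
end
end

section
/- Let (I,(·,·)) be a Cartan datum with an admissible diagram automorphism σ, and let ⟨σ⟩ be the cyclic group generated by σ. Then there exist k ≥ 0 and a chain of subgroups {1} = H_0 < H_1 < ⋯ < H_k = ⟨σ⟩ such that each index [H_{t+1} : H_t] is a prime power, and for each t the following holds: the set I/H_t of H_t-orbits carries a Cartan datum structure B_t obtained by iterating the induced-datum construction (with B_0 = (·,·)), there is an element g_t ∈ ⟨σ⟩ whose induced permutation σ_t of I/H_t is an admissible diagram automorphism of (I/H_t, B_t) of prime-power order, the σ_t-orbits on I/H_t are precisely the H_{t+1}-orbits on I, and the Cartan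 datum induced from ((I/H_t, B_t), σ_t) equals B_{t+1}; moreover B_k equals the Cartan datum induced from ((I,(·,·)), σ) on the set of σ-orbits. -/
/-!
Let `n = p₁ ⋯ p_k` be a prime factorization of the order of `σ` and `m_t = p_{t+1} ⋯ p_k`.
The subgroups `H_t = ⟨σ ^ m_t⟩` rise from `1` to `⟨σ⟩` with prime indices `p_{t+1}`, and
`g_t = σ ^ m_{t+1}` generates `H_{t+1}`. All of them lie in the abelian group `⟨σ⟩` of diagram
automorphisms, so the induced form of every level is the restriction of a single form on subsets
of `I`, and the iteration formulas regroup sums along the partition of each `H_{t+1}`-orbit into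
`H_t`-orbits. The one point that is not bookkeeping is that `g_t` permutes `I/H_t` with order
exactly `p_{t+1}`: if a power `g_t ^ c` with `0 < c < p_{t+1}` fixed every `H_t`-orbit, every
point of `I` would have a `g_t`-period prime to `p_{t+1}`, and since `⟨σ⟩` acts faithfully on `I`
the order of `g_t` would be prime to `p_{t+1}`.
-/

noncomputable section

open Finset

open Classical in
/-- The `H`-orbit of `i`, as a `Finset`, for a subgroup `H` of permutations. -/
def orbitH {I : Type} [Fintype I] [DecidableEq I] (H : Subgroup (Equiv.Perm I)) (i : I) :
    Finset I :=
  Finset.univ.filter (fun j => ∃ g ∈ H, g i = j)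

open Subgroup

namespace InducedCartan

section Orbits

variable {I : Type} [Fintype I] [DecidableEq I] {H K : Subgroup (Equiv.Perm I)} {i j : I}

lemma mem_orbitH : j ∈ orbitH H i ↔ ∃ g ∈ H, g i = j := by
  classical
  simp [orbitH]

lemma mem_orbitH_self (H : Subgroup (Equiv.Perm I)) (i : I) : i ∈ orbitH H i :=
  mem_orbitH.2 ⟨1, H.one_mem, rfl⟩

lemma orbitH_eq_of_mem (h : j ∈ orbitH H i) : orbitH H j = orbitH H i := by
  obtain ⟨g, hg, rfl⟩ := mem_orbitH.1 h
  ext b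
  simp only [mem_orbitH]
  constructor
  · rintro ⟨x, hx, rfl⟩
    exact ⟨x * g, H.mul_mem hx hg, rfl⟩
  · rintro ⟨x, hx, rfl⟩
    exact ⟨x * g⁻¹, H.mul_mem hx (H.inv_mem hg), by simp⟩

lemma orbitH_eq_iff : orbitH H i = orbitH H j ↔ j ∈ orbitH H i :=
  ⟨fun h => h ▸ mem_orbitH_self H j, fun h => (orbitH_eq_of_mem h).symm⟩

lemma ne_of_mem_orbitH_of_ne {a b : I} (hne : orbitH H i ≠ orbitH H j) (ha : a ∈ orbitH H i)
    (hb : b ∈ orbitH H j) : a ≠ b := by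
  rintro rfl
  exact hne ((orbitH_eq_of_mem ha).symm.trans (orbitH_eq_of_mem hb))

lemma orbitH_mono (hHK : H ≤ K) (i : I) : orbitH H i ⊆ orbitH K i := by
  intro a ha
  obtain ⟨g, hg, rfl⟩ := mem_orbitH.1 ha
  exact mem_orbitH.2 ⟨g, hHK hg, rfl⟩

lemma orbitH_eq_of_le (hHK : H ≤ K) (h : orbitH H i = orbitH H j) :
    orbitH K i = orbitH K j :=
  orbitH_eq_iff.2 (orbitH_mono hHK i (orbitH_eq_iff.1 h))

lemma orbitH_bot (i : I) : orbitH (⊥ : Subgroup (Equiv.Perm I)) i = {i} := by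
  ext j
  simp [mem_orbitH, eq_comm]

lemma image_orbitH_of_mem {x : Equiv.Perm I} (hx : x ∈ H) (i : I) :
    (orbitH H i).image x = orbitH H i := by
  refine eq_of_subset_of_card_le (fun b hb => ?_) (card_image_of_injective _ x.injective).ge
  obtain ⟨a, ha, rfl⟩ := mem_image.1 hb
  obtain ⟨g, hg, rfl⟩ := mem_orbitH.1 ha
  exact mem_orbitH.2 ⟨x * g, H.mul_mem hx hg, rfl⟩

lemma image_orbitH_of_commute {x : Equiv.Perm I} (hx : ∀ g ∈ H, Commute x g) (i : I) :
    (orbitH H i).image x = orbitH H (x i) := by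
  ext b
  simp only [mem_image, mem_orbitH]
  constructor
  · rintro ⟨a, ⟨g, hg, rfl⟩, rfl⟩
    exact ⟨g, hg, by rw [← Equiv.Perm.mul_apply, ← (hx g hg).eq, Equiv.Perm.mul_apply]⟩
  · rintro ⟨g, hg, rfl⟩
    exact ⟨g i, ⟨g, hg, rfl⟩, by rw [← Equiv.Perm.mul_apply, (hx g hg).eq, Equiv.Perm.mul_apply]⟩

lemma sum_orbitH_eq_sum_image {M : Type*} [AddCommMonoid M] (hHK : H ≤ K) (i : I)
    (f : I → M) :
    ∑ a ∈ orbitH K i, f a = ∑ γ ∈ (orbitH K i).image (orbitH H), ∑ a ∈ γ, f a := by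
  refine (sum_image' _ fun c hc => ?_).symm
  congr 1
  ext a
  simp only [mem_filter]
  constructor
  · intro ha
    exact ⟨orbitH_eq_of_mem hc ▸ orbitH_mono hHK c ha, orbitH_eq_of_mem ha⟩
  · rintro ⟨-, ha⟩
    exact ha ▸ mem_orbitH_self H a

lemma ne_of_mem_image_orbitH (hHK : H ≤ K) (hne : orbitH K i ≠ orbitH K j) {γ γ' : Finset I}
    (hγ : γ ∈ (orbitH K i).image (orbitH H)) (hγ' : γ' ∈ (orbitH K j).image (orbitH H)) :
    γ ≠ γ' := by
  obtain ⟨a, ha, rfl⟩ := mem_image.1 hγ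
  obtain ⟨b, hb, rfl⟩ := mem_image.1 hγ'
  intro h
  refine hne ?_
  rw [← orbitH_eq_of_mem ha, orbitH_eq_of_le hHK h, orbitH_eq_of_mem hb]

end Orbits

section Cyclic

variable {I : Type} [Fintype I] [DecidableEq I] {σ y : Equiv.Perm I} {H : Subgroup (Equiv.Perm I)}
  {i j : I}

lemma sameCycle_iff_mem_orbitH_zpowers {a b : I} :
    σ.SameCycle a b ↔ b ∈ orbitH (zpowers σ) a := by
  rw [mem_orbitH, exists_mem_zpowers]
  rfl

lemma orbitF_eq_orbitH_zpowers (σ : Equiv.Perm I) (i : I) :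
    orbitF σ i = orbitH (zpowers σ) i := by
  ext j
  simp [orbitF, sameCycle_iff_mem_orbitH_zpowers]

lemma image_orbitH_of_mem_zpowers (hH : H ≤ zpowers σ) {x : Equiv.Perm I} (hx : x ∈ zpowers σ)
    (i : I) : (orbitH H i).image x = orbitH H (x i) := by
  refine image_orbitH_of_commute (fun g hg => ?_) i
  obtain ⟨a, rfl⟩ := mem_zpowers_iff.1 hx
  obtain ⟨b, rfl⟩ := mem_zpowers_iff.1 (hH hg)
  exact Commute.zpow_zpow_self σ a b

lemma exists_orbitH_zpow_apply_eq_iff (hH : H ≤ zpowers y) :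
    (∃ z : ℤ, orbitH H ((y ^ z) i) = orbitH H j) ↔
      orbitH (zpowers y) i = orbitH (zpowers y) j := by
  simp only [orbitH_eq_iff, mem_orbitH, exists_mem_zpowers]
  constructor
  · rintro ⟨z, x, hx, rfl⟩
    obtain ⟨w, rfl⟩ := mem_zpowers_iff.1 (hH hx)
    exact ⟨w + z, by rw [zpow_add, Equiv.Perm.mul_apply]⟩
  · rintro ⟨z, rfl⟩
    exact ⟨z, 1, H.one_mem, rfl⟩

end Cyclic

section InducedForm

variable {I : Type}

def diagramAut (form : I → I → ℤ) : Subgroup (Equiv.Perm I) where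
  carrier := {x | ∀ i j, form (x i) (x j) = form i j}
  one_mem' _ _ := rfl
  mul_mem' hx hy i j := (hx _ _).trans (hy i j)
  inv_mem' {x} hx i j := by simpa using (hx (x⁻¹ i) (x⁻¹ j)).symm

variable [DecidableEq I]

/-- The diagonal entry `∑ a ∈ γ, (α_a, α_a)` is the induced `|γ| (α_i, α_i)` when `γ` is an orbit
of diagram automorphisms (`inducedForm_orbitH_self`). Being defined on subsets of `I` itself,
one form serves every level of the tower of orbit sets. -/
def inducedForm (form : I → I → ℤ) (γ γ' : Finset I) : ℤ :=
  if γ = γ' then ∑ a ∈ γ, form a a else ∑ a ∈ γ, ∑ b ∈ γ', form a b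

variable {form : I → I → ℤ}

lemma inducedForm_self (γ : Finset I) : inducedForm form γ γ = ∑ a ∈ γ, form a a :=
  if_pos rfl

lemma inducedForm_of_ne {γ γ' : Finset I} (h : γ ≠ γ') :
    inducedForm form γ γ' = ∑ a ∈ γ, ∑ b ∈ γ', form a b :=
  if_neg h

lemma inducedForm_singleton (i j : I) : inducedForm form {i} {j} = form i j := by
  by_cases h : i = j
  · subst h
    rw [inducedForm_self, sum_singleton]
  · rw [inducedForm_of_ne (by simpa using h), sum_singleton, sum_singleton]

lemma inducedForm_symm (hsymm : ∀ i j, form i j = form j i) (γ γ' : Finset I) :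
    inducedForm form γ γ' = inducedForm form γ' γ := by
  by_cases h : γ = γ'
  · rw [h]
  · rw [inducedForm_of_ne h, inducedForm_of_ne (Ne.symm h), sum_comm]
    simp only [hsymm]

lemma inducedForm_self_pos (hpos : ∀ i, 0 < form i i) {γ : Finset I} (hγ : γ.Nonempty) :
    0 < inducedForm form γ γ := by
  rw [inducedForm_self]
  exact sum_pos (fun a _ => hpos a) hγ

lemma two_dvd_inducedForm_self (heven : ∀ i, 2 ∣ form i i) (γ : Finset I) :
    2 ∣ inducedForm form γ γ := by
  rw [inducedForm_self]
  exact dvd_sum fun a _ => heven a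

lemma inducedForm_image {x : Equiv.Perm I} (hx : x ∈ diagramAut form) (γ γ' : Finset I) :
    inducedForm form (γ.image x) (γ'.image x) = inducedForm form γ γ' := by
  have hinj : ∀ s : Finset I, Set.InjOn x s := fun _ => x.injective.injOn
  by_cases h : γ = γ'
  · rw [h, inducedForm_self, inducedForm_self, sum_image (hinj _)]
    exact sum_congr rfl fun a _ => hx a a
  · rw [inducedForm_of_ne ((image_injective x.injective).ne h), inducedForm_of_ne h,
      sum_image (hinj _)]
    refine sum_congr rfl fun a _ => ?_
    rw [sum_image (hinj _)]
    exact sum_congr rfl fun b _ => hx a b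

variable [Fintype I] {H K : Subgroup (Equiv.Perm I)} {i j : I}

lemma inducedForm_orbitH_self (hH : H ≤ diagramAut form) (i : I) :
    inducedForm form (orbitH H i) (orbitH H i) = (orbitH H i).card * form i i := by
  rw [inducedForm_self, sum_congr rfl fun a ha => ?_, sum_const, nsmul_eq_mul]
  obtain ⟨g, hg, rfl⟩ := mem_orbitH.1 ha
  exact hH hg i i

lemma sum_form_orbitH_of_mem (hH : H ≤ diagramAut form) {a : I} (ha : a ∈ orbitH H i) (j : I) :
    ∑ b ∈ orbitH H j, form a b = ∑ b ∈ orbitH H j, form i b := by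
  obtain ⟨g, hg, rfl⟩ := mem_orbitH.1 ha
  conv_lhs => rw [← image_orbitH_of_mem hg j, sum_image g.injective.injOn]
  exact sum_congr rfl fun b _ => hH hg i b

lemma two_mul_inducedForm_orbitH_nonpos
    (hoff : ∀ i j, i ≠ j → 2 * form i j ≤ 0 ∧ form i i ∣ 2 * form i j)
    (hne : orbitH H i ≠ orbitH H j) :
    2 * inducedForm form (orbitH H i) (orbitH H j) ≤ 0 := by
  rw [inducedForm_of_ne hne, mul_sum]
  refine sum_nonpos fun a ha => ?_
  rw [mul_sum]
  exact sum_nonpos fun b hb => (hoff a b (ne_of_mem_orbitH_of_ne hne ha hb)).1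

lemma inducedForm_orbitH_self_dvd (hH : H ≤ diagramAut form)
    (hoff : ∀ i j, i ≠ j → 2 * form i j ≤ 0 ∧ form i i ∣ 2 * form i j)
    (hne : orbitH H i ≠ orbitH H j) :
    inducedForm form (orbitH H i) (orbitH H i) ∣
      2 * inducedForm form (orbitH H i) (orbitH H j) := by
  have hsum : 2 * inducedForm form (orbitH H i) (orbitH H j)
      = (orbitH H i).card * ∑ b ∈ orbitH H j, 2 * form i b := by
    rw [inducedForm_of_ne hne, mul_sum, sum_congr rfl fun a ha => by
      rw [sum_form_orbitH_of_mem hH ha], sum_const, nsmul_eq_mul, mul_sum]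
  rw [hsum, inducedForm_orbitH_self hH]
  refine mul_dvd_mul_left _ (dvd_sum fun b hb => ?_)
  exact (hoff i b (ne_of_mem_orbitH_of_ne hne (mem_orbitH_self H i) hb)).2

lemma inducedForm_orbitH_isCartan (hsymm : ∀ i j, form i j = form j i)
    (hpos : ∀ i, 0 < form i i) (heven : ∀ i, 2 ∣ form i i)
    (hoff : ∀ i j, i ≠ j → 2 * form i j ≤ 0 ∧ form i i ∣ 2 * form i j)
    (hH : H ≤ diagramAut form) :
    (∀ i j : I, inducedForm form (orbitH H i) (orbitH H j)
        = inducedForm form (orbitH H j) (orbitH H i)) ∧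
      (∀ i : I, 0 < inducedForm form (orbitH H i) (orbitH H i) ∧
        2 ∣ inducedForm form (orbitH H i) (orbitH H i)) ∧
      (∀ i j : I, orbitH H i ≠ orbitH H j →
        2 * inducedForm form (orbitH H i) (orbitH H j) ≤ 0 ∧
        inducedForm form (orbitH H i) (orbitH H i) ∣
          2 * inducedForm form (orbitH H i) (orbitH H j)) :=
  ⟨fun _ _ => inducedForm_symm hsymm _ _,
    fun i => ⟨inducedForm_self_pos hpos ⟨i, mem_orbitH_self H i⟩, two_dvd_inducedForm_self heven _⟩,
    fun _ _ hne => ⟨two_mul_inducedForm_orbitH_nonpos hoff hne,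
      inducedForm_orbitH_self_dvd hH hoff hne⟩⟩

lemma inducedForm_orbitH_eq_zero {σ : Equiv.Perm I}
    (hadm : ∀ i j, i ≠ j → σ.SameCycle i j → form i j = 0) (hH : H ≤ zpowers σ)
    (hne : orbitH H i ≠ orbitH H j) (hσ : orbitH (zpowers σ) i = orbitH (zpowers σ) j) :
    inducedForm form (orbitH H i) (orbitH H j) = 0 := by
  rw [inducedForm_of_ne hne]
  refine sum_eq_zero fun a ha => sum_eq_zero fun b hb => ?_
  refine hadm a b (ne_of_mem_orbitH_of_ne hne ha hb) ?_
  rw [sameCycle_iff_mem_orbitH_zpowers, ← orbitH_eq_iff, orbitH_eq_of_mem (orbitH_mono hH i ha),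
    orbitH_eq_of_mem (orbitH_mono hH j hb), hσ]

lemma inducedForm_orbitH_apply {σ : Equiv.Perm I} (hσ : σ ∈ diagramAut form) (hH : H ≤ zpowers σ)
    {x : Equiv.Perm I} (hx : x ∈ zpowers σ) (i j : I) :
    inducedForm form (orbitH H (x i)) (orbitH H (x j)) =
      inducedForm form (orbitH H i) (orbitH H j) := by
  rw [← image_orbitH_of_mem_zpowers hH hx, ← image_orbitH_of_mem_zpowers hH hx]
  exact inducedForm_image (zpowers_le.2 hσ hx) _ _

lemma inducedForm_orbitH_self_of_le {σ : Equiv.Perm I} (hσ : σ ∈ diagramAut form)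
    (hK : K ≤ zpowers σ) (hHK : H ≤ K) (i : I) :
    inducedForm form (orbitH K i) (orbitH K i) =
      ((orbitH K i).image (orbitH H)).card * inducedForm form (orbitH H i) (orbitH H i) := by
  rw [inducedForm_self, sum_orbitH_eq_sum_image hHK, ← nsmul_eq_mul, ← sum_const]
  refine sum_congr rfl fun γ hγ => ?_
  obtain ⟨a, ha, rfl⟩ := mem_image.1 hγ
  obtain ⟨x, hx, rfl⟩ := mem_orbitH.1 ha
  rw [← inducedForm_self, inducedForm_orbitH_apply hσ (hHK.trans hK) (hK hx)]

lemma inducedForm_orbitH_of_le (hHK : H ≤ K) (hne : orbitH K i ≠ orbitH K j) :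
    inducedForm form (orbitH K i) (orbitH K j) =
      ∑ γ ∈ (orbitH K i).image (orbitH H), ∑ γ' ∈ (orbitH K j).image (orbitH H),
        inducedForm form γ γ' := by
  rw [inducedForm_of_ne hne, sum_orbitH_eq_sum_image hHK]
  refine sum_congr rfl fun γ hγ => ?_
  rw [sum_congr rfl fun a _ => sum_orbitH_eq_sum_image hHK j (form a), sum_comm]
  exact sum_congr rfl fun γ' hγ' =>
    (inducedForm_of_ne (ne_of_mem_image_orbitH hHK hne hγ hγ')).symm

end InducedForm

lemma exists_prime_chain {G : Type*} [Monoid G] {x : G} (hx : IsOfFinOrder x) :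
    ∃ (k : ℕ) (m p : ℕ → ℕ), x ^ m 0 = 1 ∧ m k = 1 ∧
      ∀ t < k, (p t).Prime ∧ m t = m (t + 1) * p t ∧ p t ∣ orderOf (x ^ m (t + 1)) := by
  set ps := (orderOf x).primeFactorsList
  have hprod : ps.prod = orderOf x := Nat.prod_primeFactorsList hx.orderOf_pos.ne'
  have hdvd : ∀ t, (ps.drop t).prod ∣ orderOf x := fun t =>
    hprod ▸ (List.drop_sublist t ps).prod_dvd_prod
  refine ⟨ps.length, fun t => (ps.drop t).prod, fun t => ps.getD t 1, ?_, by simp, ?_⟩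
  · simp [hprod, pow_orderOf_eq_one]
  intro t ht
  have hcons : (ps.drop t).prod = (ps.drop (t + 1)).prod * ps.getD t 1 := by
    rw [List.drop_eq_getElem_cons ht, List.prod_cons, mul_comm, List.getD_eq_getElem _ _ ht]
  refine ⟨?_, hcons, ?_⟩ <;> beta_reduce
  · rw [show ps.getD t 1 = ps[t] from List.getD_eq_getElem _ _ ht]
    exact Nat.prime_of_mem_primeFactorsList (List.getElem_mem ht)
  · rw [orderOf_pow_of_dvd (Nat.pos_of_dvd_of_pos (hdvd _) hx.orderOf_pos).ne' (hdvd _)]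
    refine Nat.dvd_div_of_mul_dvd ?_
    simpa only [hcons, mul_comm] using hdvd t

section Tower

lemma relIndex_zpowers_pow {G : Type*} [Group G] {y : G} (hy : IsOfFinOrder y) {p : ℕ}
    (hp : p ≠ 0) (hpy : p ∣ orderOf y) :
    (zpowers (y ^ p)).relIndex (zpowers y) = p := by
  have hmul := relIndex_mul_relIndex ⊥ _ _ bot_le (zpowers_le.2 (npow_mem_zpowers y p))
  rw [relIndex_bot_left, relIndex_bot_left, Nat.card_zpowers, Nat.card_zpowers,
    orderOf_pow_of_dvd hp hpy] at hmul
  refine Nat.eq_of_mul_eq_mul_left (Nat.div_pos (Nat.le_of_dvd hy.orderOf_pos hpy)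
    (Nat.pos_of_ne_zero hp)) ?_
  rw [hmul, Nat.div_mul_cancel hpy]

lemma zpowers_pow_lt_zpowers {G : Type*} [Group G] {y : G} (hy : IsOfFinOrder y) {p : ℕ}
    (hp : p.Prime) (hpy : p ∣ orderOf y) : zpowers (y ^ p) < zpowers y := by
  refine lt_of_le_not_ge (zpowers_le.2 (npow_mem_zpowers y p)) fun hle => hp.one_lt.ne' ?_
  rw [← relIndex_zpowers_pow hy hp.ne_zero hpy, relIndex_eq_one.2 hle]

lemma not_dvd_orderOf_of_forall_zpow_apply_eq {I : Type} [Finite I] {y : Equiv.Perm I} {p : ℕ}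
    (hp : p.Prime) (h : ∀ i, ∃ e : ℤ, ¬ (p : ℤ) ∣ e ∧ (y ^ e) i = i) : ¬ p ∣ orderOf y := by
  intro hpy
  have hpos := orderOf_pos y
  have hone : y ^ (orderOf y / p) = 1 := by
    ext i
    obtain ⟨e, hpe, he⟩ := h i
    have hper : (MulAction.period y i : ℤ) ∣ e := MulAction.zpow_smul_eq_iff_period_dvd.1 he
    have hcop : (MulAction.period y i).Coprime p := Nat.Coprime.symm <|
      hp.coprime_iff_not_dvd.2 fun hd => hpe ((Int.natCast_dvd_natCast.2 hd).trans hper)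
    have hdvd : MulAction.period y i ∣ orderOf y / p := hcop.dvd_of_dvd_mul_left <| by
      rw [Nat.mul_div_cancel' hpy]
      exact MulAction.period_dvd_orderOf y i
    exact MulAction.pow_smul_eq_iff_period_dvd.2 hdvd
  exact (Nat.div_lt_self hpos hp.one_lt).not_ge
    (orderOf_le_of_pow_eq_one (Nat.div_pos (Nat.le_of_dvd hpos hpy) hp.pos) hone)

variable {I : Type} [Fintype I] [DecidableEq I] {y : Equiv.Perm I} {p : ℕ}

lemma orbitH_zpowers_pow_apply_self (i : I) :
    orbitH (zpowers (y ^ p)) ((y ^ p) i) = orbitH (zpowers (y ^ p)) i :=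
  orbitH_eq_of_mem (mem_orbitH.2 ⟨y ^ p, mem_zpowers _, rfl⟩)

lemma le_of_forall_orbitH_zpowers_pow_apply (hp : p.Prime) (hpy : p ∣ orderOf y) {c : ℕ}
    (hc : 0 < c) (h : ∀ i, orbitH (zpowers (y ^ p)) ((y ^ c) i) = orbitH (zpowers (y ^ p)) i) :
    p ≤ c := by
  by_contra! hcp
  refine not_dvd_orderOf_of_forall_zpow_apply_eq hp (fun i => ?_) hpy
  obtain ⟨x, hx, hxi⟩ := mem_orbitH.1 (orbitH_eq_iff.1 (h i))
  obtain ⟨z, rfl⟩ := mem_zpowers_iff.1 hx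
  refine ⟨p * z + c, ?_, ?_⟩
  · rw [Int.dvd_add_right (dvd_mul_right _ _), Int.natCast_dvd_natCast]
    exact Nat.not_dvd_of_pos_of_lt hc hcp
  · rw [zpow_add, zpow_mul, zpow_natCast, zpow_natCast, Equiv.Perm.mul_apply]
    exact hxi

end Tower

end InducedCartan

open InducedCartan

theorem stmt3_general {I : Type} [Fintype I] [DecidableEq I]
    (form : I → I → ℤ)
    (hsymm : ∀ i j, form i j = form j i)
    (hdiag_pos : ∀ i, 0 < form i i) (hdiag_even : ∀ i, 2 ∣ form i i)
    (hoff : ∀ i j, i ≠ j → 2 * form i j ≤ 0 ∧ form i i ∣ 2 * form i j)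
    (σ : Equiv.Perm I)
    (hform : ∀ i j, form (σ i) (σ j) = form i j)
    (hadm : ∀ i j, i ≠ j → σ.SameCycle i j → form i j = 0) :
    ∃ (k : ℕ) (H : ℕ → Subgroup (Equiv.Perm I))
      (B : ℕ → Finset I → Finset I → ℤ) (g : ℕ → Equiv.Perm I),
      -- the chain of subgroups
      H 0 = ⊥ ∧ H k = Subgroup.zpowers σ ∧
      (∀ t, t < k → H t < H (t + 1)) ∧
      -- each index [H_{t+1} : H_t] is a prime power
      (∀ t, t < k → IsPrimePow ((H t).relIndex (H (t + 1)))) ∧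
      -- B_0 is the original form (H_0-orbits are singletons)
      (∀ i j : I, B 0 (orbitH (H 0) i) (orbitH (H 0) j) = form i j) ∧
      -- each B_t is a Cartan datum on the set I/H_t of H_t-orbits
      (∀ t, t ≤ k →
        (∀ i j : I, B t (orbitH (H t) i) (orbitH (H t) j)
            = B t (orbitH (H t) j) (orbitH (H t) i)) ∧
        (∀ i : I, 0 < B t (orbitH (H t) i) (orbitH (H t) i) ∧
            2 ∣ B t (orbitH (H t) i) (orbitH (H t) i)) ∧
        (∀ i j : I, orbitH (H t) i ≠ orbitH (H t) j →
            2 * B t (orbitH (H t) i) (orbitH (H t) j) ≤ 0 ∧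
            B t (orbitH (H t) i) (orbitH (H t) i) ∣
              2 * B t (orbitH (H t) i) (orbitH (H t) j))) ∧
      -- g_t ∈ ⟨σ⟩, and g_t maps H_t-orbits to H_t-orbits, inducing a permutation σ_t of I/H_t
      (∀ t, t < k → g t ∈ Subgroup.zpowers σ) ∧
      (∀ t, t < k → ∀ i : I, (orbitH (H t) i).image (g t) = orbitH (H t) ((g t) i)) ∧
      -- σ_t is a diagram automorphism of (I/H_t, B_t) ...
      (∀ t, t < k → ∀ i j : I,
        B t (orbitH (H t) ((g t) i)) (orbitH (H t) ((g t) j))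
          = B t (orbitH (H t) i) (orbitH (H t) j)) ∧
      -- ... which is admissible ...
      (∀ t, t < k → ∀ i j : I, orbitH (H t) i ≠ orbitH (H t) j →
        (∃ nz : ℤ, orbitH (H t) (((g t) ^ nz) i) = orbitH (H t) j) →
        B t (orbitH (H t) i) (orbitH (H t) j) = 0) ∧
      -- ... and has prime-power order as a permutation of I/H_t
      (∀ t, t < k → ∃ c : ℕ, IsPrimePow c ∧
        (∀ i : I, orbitH (H t) (((g t) ^ c) i) = orbitH (H t) i) ∧
        (∀ c' : ℕ, 0 < c' → (∀ i : I, orbitH (H t) (((g t) ^ c') i) = orbitH (H t) i) →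
          c ≤ c')) ∧
      -- the σ_t-orbits on I/H_t are precisely the H_{t+1}-orbits on I
      (∀ t, t < k → ∀ i j : I,
        (∃ nz : ℤ, orbitH (H t) (((g t) ^ nz) i) = orbitH (H t) j) ↔
          orbitH (H (t + 1)) i = orbitH (H (t + 1)) j) ∧
      -- B_{t+1} is the Cartan datum induced from ((I/H_t, B_t), σ_t)
      (∀ t, t < k →
        (∀ i : I, B (t + 1) (orbitH (H (t + 1)) i) (orbitH (H (t + 1)) i)
            = ((orbitH (H (t + 1)) i).image (orbitH (H t))).card *
                B t (orbitH (H t) i) (orbitH (H t) i)) ∧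
        (∀ i j : I, orbitH (H (t + 1)) i ≠ orbitH (H (t + 1)) j →
          B (t + 1) (orbitH (H (t + 1)) i) (orbitH (H (t + 1)) j)
            = ∑ γ ∈ (orbitH (H (t + 1)) i).image (orbitH (H t)),
                ∑ γ' ∈ (orbitH (H (t + 1)) j).image (orbitH (H t)), B t γ γ')) ∧
      -- B_k is the Cartan datum induced from ((I,(·,·)), σ) on the σ-orbits
      (∀ i : I, B k (orbitH (H k) i) (orbitH (H k) i)
          = (orbitF σ i).card * form i i) ∧
      (∀ i j : I, orbitH (H k) i ≠ orbitH (H k) j →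
        B k (orbitH (H k) i) (orbitH (H k) j)
          = ∑ a ∈ orbitF σ i, ∑ b ∈ orbitF σ j, form a b) := by
  obtain ⟨k, m, p, hm0, hmk, hstep⟩ := exists_prime_chain (isOfFinOrder_of_finite σ)
  set H : ℕ → Subgroup (Equiv.Perm I) := fun t => zpowers (σ ^ m t)
  set g : ℕ → Equiv.Perm I := fun t => σ ^ m (t + 1)
  have hHg : ∀ t < k, H t = zpowers (g t ^ p t) := fun t ht => by
    simp only [H, g, ← pow_mul, ← (hstep t ht).2.1]
  have hHle : ∀ t < k, H t ≤ H (t + 1) := fun t ht =>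
    hHg t ht ▸ zpowers_le.2 (npow_mem_zpowers _ _)
  have hHσ : ∀ t, H t ≤ zpowers σ := fun t => zpowers_le.2 (npow_mem_zpowers σ _)
  have hHaut : ∀ t, H t ≤ diagramAut form := fun t => (hHσ t).trans (zpowers_le.2 hform)
  have hgσ : ∀ t, g t ∈ zpowers σ := fun t => npow_mem_zpowers σ _
  have hHk : H k = zpowers σ := by simp [H, hmk]
  have hσk : ∀ i, orbitH (H k) i = orbitF σ i := fun i => by rw [hHk, orbitF_eq_orbitH_zpowers]
  refine ⟨k, H, fun _ => inducedForm form, g, by simp [H, hm0], hHk, ?_, ?_, ?_, ?_, ?_, ?_, ?_,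
    ?_, ?_, ?_, ?_, ?_, ?_⟩
  · exact fun t ht => hHg t ht ▸ zpowers_pow_lt_zpowers (isOfFinOrder_of_finite _)
      (hstep t ht).1 (hstep t ht).2.2
  · intro t ht
    rw [hHg t ht, relIndex_zpowers_pow (isOfFinOrder_of_finite _) (hstep t ht).1.ne_zero
      (hstep t ht).2.2]
    exact (hstep t ht).1.isPrimePow
  · simp [H, hm0, orbitH_bot, inducedForm_singleton]
  · exact fun t _ => inducedForm_orbitH_isCartan hsymm hdiag_pos hdiag_even hoff (hHaut t)
  · exact fun t _ => hgσ t
  · exact fun t _ => image_orbitH_of_mem_zpowers (hHσ t) (hgσ t)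
  · exact fun t _ => inducedForm_orbitH_apply hform (hHσ t) (hgσ t)
  · exact fun t ht i j hne hlink => inducedForm_orbitH_eq_zero hadm (hHσ t) hne
      (orbitH_eq_of_le (hHσ (t + 1)) ((exists_orbitH_zpow_apply_eq_iff (hHle t ht)).1 hlink))
  · intro t ht
    obtain ⟨hp, -, hpg⟩ := hstep t ht
    rw [hHg t ht]
    exact ⟨p t, hp.isPrimePow, orbitH_zpowers_pow_apply_self,
      fun c hc => le_of_forall_orbitH_zpowers_pow_apply hp hpg hc⟩
  · exact fun t ht i j => exists_orbitH_zpow_apply_eq_iff (hHle t ht)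
  · exact fun t ht => ⟨inducedForm_orbitH_self_of_le hform (hHσ (t + 1)) (hHle t ht),
      fun i j => inducedForm_orbitH_of_le (hHle t ht)⟩
  · exact fun i => hσk i ▸ inducedForm_orbitH_self (hHaut k) i
  · exact fun i j hne => hσk i ▸ hσk j ▸ inducedForm_of_ne hne

/-- for a Cartan datum `(I,(·,·))` with an admissible diagram automorphism
`σ`, there is a chain `{1} = H_0 < H_1 < ⋯ < H_k = ⟨σ⟩` of subgroups with prime-power
indices, Cartan data `B_t` on the orbit sets `I/H_t` obtained by iterating the
induced-datum construction, and elements `g_t ∈ ⟨σ⟩` inducing admissible diagram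
automorphisms `σ_t` of `(I/H_t, B_t)` of prime-power order whose orbits are the
`H_{t+1}`-orbits, with `B_{t+1}` the datum induced from `((I/H_t,B_t),σ_t)`; and `B_k`
is the Cartan datum induced from `((I,(·,·)),σ)` on the set of `σ`-orbits. -/
theorem stmt3 {I : Type} [Fintype I] [DecidableEq I] [Nonempty I]
    (form : I → I → ℤ)
    (hsymm : ∀ i j, form i j = form j i)
    (hdiag_pos : ∀ i, 0 < form i i) (hdiag_even : ∀ i, 2 ∣ form i i)
    (hoff : ∀ i j, i ≠ j → 2 * form i j ≤ 0 ∧ form i i ∣ 2 * form i j)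
    (σ : Equiv.Perm I)
    (hform : ∀ i j, form (σ i) (σ j) = form i j)
    (hadm : ∀ i j, i ≠ j → σ.SameCycle i j → form i j = 0) :
    ∃ (k : ℕ) (H : ℕ → Subgroup (Equiv.Perm I))
      (B : ℕ → Finset I → Finset I → ℤ) (g : ℕ → Equiv.Perm I),
      -- the chain of subgroups
      H 0 = ⊥ ∧ H k = Subgroup.zpowers σ ∧
      (∀ t, t < k → H t < H (t + 1)) ∧
      -- each index [H_{t+1} : H_t] is a prime power
      (∀ t, t < k → IsPrimePow ((H t).relIndex (H (t + 1)))) ∧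
      -- B_0 is the original form (H_0-orbits are singletons)
      (∀ i j : I, B 0 (orbitH (H 0) i) (orbitH (H 0) j) = form i j) ∧
      -- each B_t is a Cartan datum on the set I/H_t of H_t-orbits
      (∀ t, t ≤ k →
        (∀ i j : I, B t (orbitH (H t) i) (orbitH (H t) j)
            = B t (orbitH (H t) j) (orbitH (H t) i)) ∧
        (∀ i : I, 0 < B t (orbitH (H t) i) (orbitH (H t) i) ∧
            2 ∣ B t (orbitH (H t) i) (orbitH (H t) i)) ∧
        (∀ i j : I, orbitH (H t) i ≠ orbitH (H t) j →
            2 * B t (orbitH (H t) i) (orbitH (H t) j) ≤ 0 ∧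
            B t (orbitH (H t) i) (orbitH (H t) i) ∣
              2 * B t (orbitH (H t) i) (orbitH (H t) j))) ∧
      -- g_t ∈ ⟨σ⟩, and g_t maps H_t-orbits to H_t-orbits, inducing a permutation σ_t of I/H_t
      (∀ t, t < k → g t ∈ Subgroup.zpowers σ) ∧
      (∀ t, t < k → ∀ i : I, (orbitH (H t) i).image (g t) = orbitH (H t) ((g t) i)) ∧
      -- σ_t is a diagram automorphism of (I/H_t, B_t) ...
      (∀ t, t < k → ∀ i j : I,
        B t (orbitH (H t) ((g t) i)) (orbitH (H t) ((g t) j))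
          = B t (orbitH (H t) i) (orbitH (H t) j)) ∧
      -- ... which is admissible ...
      (∀ t, t < k → ∀ i j : I, orbitH (H t) i ≠ orbitH (H t) j →
        (∃ nz : ℤ, orbitH (H t) (((g t) ^ nz) i) = orbitH (H t) j) →
        B t (orbitH (H t) i) (orbitH (H t) j) = 0) ∧
      -- ... and has prime-power order as a permutation of I/H_t
      (∀ t, t < k → ∃ c : ℕ, IsPrimePow c ∧
        (∀ i : I, orbitH (H t) (((g t) ^ c) i) = orbitH (H t) i) ∧
        (∀ c' : ℕ, 0 < c' → (∀ i : I, orbitH (H t) (((g t) ^ c') i) = orbitH (H t) i) →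
          c ≤ c')) ∧
      -- the σ_t-orbits on I/H_t are precisely the H_{t+1}-orbits on I
      (∀ t, t < k → ∀ i j : I,
        (∃ nz : ℤ, orbitH (H t) (((g t) ^ nz) i) = orbitH (H t) j) ↔
          orbitH (H (t + 1)) i = orbitH (H (t + 1)) j) ∧
      -- B_{t+1} is the Cartan datum induced from ((I/H_t, B_t), σ_t)
      (∀ t, t < k →
        (∀ i : I, B (t + 1) (orbitH (H (t + 1)) i) (orbitH (H (t + 1)) i)
            = ((orbitH (H (t + 1)) i).image (orbitH (H t))).card *
                B t (orbitH (H t) i) (orbitH (H t) i)) ∧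
        (∀ i j : I, orbitH (H (t + 1)) i ≠ orbitH (H (t + 1)) j →
          B (t + 1) (orbitH (H (t + 1)) i) (orbitH (H (t + 1)) j)
            = ∑ γ ∈ (orbitH (H (t + 1)) i).image (orbitH (H t)),
                ∑ γ' ∈ (orbitH (H (t + 1)) j).image (orbitH (H t)), B t γ γ')) ∧
      -- B_k is the Cartan datum induced from ((I,(·,·)), σ) on the σ-orbits
      (∀ i : I, B k (orbitH (H k) i) (orbitH (H k) i)
          = (orbitF σ i).card * form i i) ∧
      (∀ i j : I, orbitH (H k) i ≠ orbitH (H k) j →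
        B k (orbitH (H k) i) (orbitH (H k) j)
          = ∑ a ∈ orbitF σ i, ∑ b ∈ orbitF σ j, form a b) :=
  stmt3_general form hsymm hdiag_pos hdiag_even hoff σ hform hadm
end
end

section
/- For all integers r ≥ 1, t with 1 ≤ t ≤ r, and arbitrary k ∈ ℤ, the identity Σ_{s=0}^{r} (−1)^s [r ¦ s] · [t+k−s−1 ¦ t−1] · [r+k−s ¦ r−t] = 0 holds in ℚ(q). -/
/-!
As a function of `s`, each q-integer `[a - s]` is a combination of `q^{±s}`. The product
`[t+k-s-1 ¦ t-1] [r+k-s ¦ r-t]` is a constant times `r - 1` such factors, hence a combination of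
`s ↦ (q^{2j+1-r})^s`, `0 ≤ j < r`. By the q-binomial theorem
`∑ₛ (-1)^s [r ¦ s] x^s = ∏_{i<r} (1 - q^{r-1-2i} x)`, and at `x = q^{2j+1-r}` the factor `i = j`
vanishes.
-/

noncomputable section

open Finset

/-- The field `ℚ(q)` of rational functions. -/
abbrev K : Type := RatFunc ℚ

/-- The variable `q`. -/
def q : K := RatFunc.X

/-- The balanced `q`-integer `[n] = (q^n - q^{-n})/(q - q^{-1})`. -/
def qint (n : ℤ) : K := (q ^ n - q ^ (-n)) / (q - q⁻¹)

/-- The `q`-factorial `[m]! = [1][2]⋯[m]`. -/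
def qfact (m : ℕ) : K := ∏ t ∈ Finset.range m, qint (t + 1)

/-- The `q`-binomial coefficient `[n ¦ m] = [n][n-1]⋯[n-m+1]/[m]!`. -/
def qbinom (n : ℤ) (m : ℕ) : K := (∏ t ∈ Finset.range m, qint (n - t)) / qfact m

lemma q_ne_zero : q ≠ 0 := RatFunc.X_ne_zero

lemma q_zpow_eq_one_iff {n : ℤ} : q ^ n = 1 ↔ n = 0 := by
  classical
  refine ⟨fun h => ?_, fun h => by rw [h, zpow_zero]⟩
  have := congrArg (RatFunc.inftyValuation ℚ) h
  rwa [q, RatFunc.inftyValuation.X_zpow, map_one, ← WithZero.exp_zero, WithZero.exp_inj] at this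

lemma qint_ne_zero {n : ℤ} (hn : n ≠ 0) : qint n ≠ 0 := by
  have hsub : ∀ {m : ℤ}, m ≠ 0 → q ^ m - q ^ (-m) ≠ 0 := fun {m} hm h => by
    rw [sub_eq_zero, ← div_eq_one_iff_eq (zpow_ne_zero _ q_ne_zero), ← zpow_sub₀ q_ne_zero,
      q_zpow_eq_one_iff] at h
    omega
  refine div_ne_zero (hsub hn) ?_
  simpa using hsub one_ne_zero

lemma qfact_ne_zero (m : ℕ) : qfact m ≠ 0 :=
  prod_ne_zero_iff.mpr fun i _ => qint_ne_zero (by omega)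

lemma qint_split (n m : ℤ) : qint n = q ^ (-m) * qint (n - m) + q ^ (n - m) * qint m := by
  simp only [qint, zpow_neg, zpow_sub₀ q_ne_zero]
  have := zpow_ne_zero n q_ne_zero
  have := zpow_ne_zero m q_ne_zero
  field_simp
  ring

lemma qbinom_succ (n : ℤ) (m : ℕ) :
    qbinom n (m + 1) =
      q ^ (-(m + 1 : ℤ)) * qbinom (n - 1) (m + 1) + q ^ (n - (m + 1)) * qbinom (n - 1) m := by
  have hn : ∏ i ∈ range (m + 1), qint (n - i) = qint n * ∏ i ∈ range m, qint (n - 1 - i) := by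
    rw [prod_range_succ', mul_comm]; push_cast; simp only [sub_zero, sub_add_eq_sub_sub_swap]
  have hn1 : ∏ i ∈ range (m + 1), qint (n - 1 - i) =
      (∏ i ∈ range m, qint (n - 1 - i)) * qint (n - (m + 1)) := by
    rw [prod_range_succ, sub_sub, add_comm (1 : ℤ)]
  have hf : qfact (m + 1) = qfact m * qint (m + 1) := prod_range_succ _ _
  have := qfact_ne_zero m
  have := qint_ne_zero (n := m + 1) (by omega)
  rw [qbinom, qbinom, qbinom, hn, hn1, hf, qint_split n (m + 1)]
  field_simp

lemma qbinom_zero (n : ℤ) : qbinom n 0 = 1 := by simp [qbinom, qfact]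

lemma qbinom_natCast_succ (r : ℕ) : qbinom r (r + 1) = 0 := by
  rw [qbinom, prod_eq_zero (self_mem_range_succ r) (by simp [qint]), zero_div]

theorem qbinomial_theorem (r : ℕ) (x : K) :
    ∑ s ∈ range (r + 1), (-1) ^ s * qbinom r s * x ^ s =
      ∏ i ∈ range r, (1 - q ^ ((r : ℤ) - 1 - 2 * i) * x) := by
  induction r generalizing x with
  | zero => simp [qbinom_zero]
  | succ r ih =>
    set f : ℕ → K := fun s => (-1) ^ s * qbinom r s * (x * q⁻¹) ^ s
    have hpow : ∀ s : ℕ, q ^ (-(s : ℤ)) * x ^ s = (x * q⁻¹) ^ s := fun s => by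
      rw [zpow_neg, zpow_natCast, mul_pow, inv_pow, mul_comm]
    have step : ∀ s ∈ range (r + 1), (-1) ^ (s + 1) * qbinom (r + 1 : ℕ) (s + 1) * x ^ (s + 1) =
        f (s + 1) - q ^ (r : ℤ) * x * f s := by
      intro s _
      have e1 := hpow (s + 1)
      have e2 : q ^ ((r : ℤ) - s) * x ^ (s + 1) = q ^ (r : ℤ) * x * (x * q⁻¹) ^ s := by
        rw [← hpow, sub_eq_add_neg, zpow_add₀ q_ne_zero]; ring
      push_cast at e1 ⊢
      rw [qbinom_succ, add_sub_cancel_right, add_sub_add_right_eq_sub]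
      linear_combination (-1) ^ (s + 1) * qbinom r (s + 1) * e1 + (-1) ^ (s + 1) * qbinom r s * e2
    have shift : ∑ s ∈ range (r + 1), f (s + 1) + 1 = ∑ s ∈ range (r + 1), f s := by
      have h0 : f 0 = 1 := by simp [f, qbinom_zero]
      rw [← h0, ← sum_range_succ', sum_range_succ]
      simp [f, qbinom_natCast_succ]
    have hprod : ∀ i ∈ range r, 1 - q ^ (((r + 1 : ℕ) : ℤ) - 1 - 2 * (i + 1 : ℕ)) * x =
        1 - q ^ ((r : ℤ) - 1 - 2 * i) * (x * q⁻¹) := fun i _ => by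
      rw [← mul_assoc, mul_right_comm, ← zpow_sub_one₀ q_ne_zero]; push_cast; ring_nf
    rw [sum_range_succ', sum_congr rfl step, sum_sub_distrib, ← mul_sum, prod_range_succ',
      prod_congr rfl hprod, ← ih, ← shift]
    simp only [pow_zero, qbinom_zero, mul_one, Nat.cast_add, Nat.cast_one, add_sub_cancel_right,
      CharP.cast_eq_zero, mul_zero, sub_zero]
    ring

theorem sum_neg_one_pow_mul_qbinom_mul_zpow_eq_zero {r j : ℕ} (hj : j < r) :
    ∑ s ∈ range (r + 1), (-1) ^ s * qbinom r s * (q ^ (2 * (j : ℤ) + 1 - r)) ^ s = 0 := by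
  rw [qbinomial_theorem]
  refine prod_eq_zero (mem_range.mpr hj) ?_
  rw [← zpow_add₀ q_ne_zero, sub_eq_zero, eq_comm, q_zpow_eq_one_iff]
  ring

open Polynomial in
/-- `f` is a linear combination of `s ↦ q^{(d-2j)s}`, `0 ≤ j ≤ d`,
written as `q^{-ds} p(q^{2s})`. -/
def IsLaurentOfDegree (d : ℕ) (f : ℤ → K) : Prop :=
  ∃ p : K[X], p.natDegree ≤ d ∧ ∀ s, f s = q ^ (-(d * s)) * p.eval (q ^ (2 * s))

namespace IsLaurentOfDegree

open Polynomial

theorem const (c : K) : IsLaurentOfDegree 0 fun _ => c :=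
  ⟨C c, by simp⟩

theorem mul {d e : ℕ} {f g : ℤ → K} (hf : IsLaurentOfDegree d f) (hg : IsLaurentOfDegree e g) :
    IsLaurentOfDegree (d + e) fun s => f s * g s := by
  obtain ⟨p, hp, hfp⟩ := hf
  obtain ⟨p', hp', hgp'⟩ := hg
  refine ⟨p * p', natDegree_mul_le.trans (add_le_add hp hp'), fun s => ?_⟩
  beta_reduce
  rw [hfp, hgp', eval_mul, mul_mul_mul_comm, ← zpow_add₀ q_ne_zero]
  push_cast
  ring_nf

theorem prod {d : ℕ} {f : ℕ → ℤ → K} (hf : ∀ i, IsLaurentOfDegree 1 (f i)) :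
    IsLaurentOfDegree d fun s => ∏ i ∈ range d, f i s := by
  induction d with
  | zero => simpa using const 1
  | succ d ih => simpa only [prod_range_succ] using ih.mul (hf d)

theorem qint_sub (a : ℤ) : IsLaurentOfDegree 1 fun s => qint (a - s) := by
  refine ⟨C (-q ^ (-a) / (q - q⁻¹)) * X + C (q ^ a / (q - q⁻¹)), natDegree_linear_le, fun s => ?_⟩
  simp only [qint, eval_add, eval_mul, eval_C, eval_X]
  rw [two_mul, zpow_add₀ q_ne_zero]
  simp only [Nat.cast_one, one_mul, zpow_sub₀ q_ne_zero, zpow_neg]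
  field_simp
  ring

theorem qbinom_sub (a : ℤ) (m : ℕ) : IsLaurentOfDegree m fun s => qbinom (a - s) m := by
  have h := (prod (d := m) fun i => qint_sub (a - i)).mul (const (qfact m)⁻¹)
  simp only [add_zero] at h
  convert h using 2 with s
  rw [qbinom, div_eq_mul_inv]
  congr 1
  refine prod_congr rfl fun i _ => ?_
  ring_nf

theorem sum_neg_one_pow_mul_qbinom_mul_eq_zero {d : ℕ} {f : ℤ → K} (hf : IsLaurentOfDegree d f) :
    ∑ s ∈ range (d + 2), (-1) ^ s * qbinom (d + 1 : ℕ) s * f s = 0 := by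
  obtain ⟨p, hp, hfp⟩ := hf
  have hterm : ∀ s : ℕ, (-1) ^ s * qbinom (d + 1 : ℕ) s * f s =
      ∑ j ∈ range (d + 1), p.coeff j *
        ((-1) ^ s * qbinom (d + 1 : ℕ) s * (q ^ (2 * (j : ℤ) + 1 - (d + 1 : ℕ))) ^ s) := by
    intro s
    rw [hfp, Polynomial.eval_eq_sum_range' (Nat.lt_succ_of_le hp), mul_sum, mul_sum]
    refine sum_congr rfl fun j _ => ?_
    have hexp : q ^ (-(d * (s : ℤ))) * (q ^ (2 * (s : ℤ))) ^ j =
        (q ^ (2 * (j : ℤ) + 1 - (d + 1 : ℕ))) ^ s := by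
      rw [← zpow_natCast, ← zpow_natCast, ← zpow_mul, ← zpow_mul, ← zpow_add₀ q_ne_zero]
      push_cast
      ring_nf
    rw [← hexp]
    ring
  simp_rw [hterm]
  rw [sum_comm]
  exact sum_eq_zero fun j hj => by
    rw [← mul_sum, sum_neg_one_pow_mul_qbinom_mul_zpow_eq_zero (mem_range.mp hj), mul_zero]

end IsLaurentOfDegree

theorem stmt7_general (r t : ℕ) (ht1 : 1 ≤ t) (htr : t ≤ r) (k : ℤ) :
    ∑ s ∈ Finset.range (r + 1),
      (-1 : K) ^ s * qbinom (r : ℤ) s * qbinom ((t : ℤ) + k - (s : ℤ) - 1) (t - 1) *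
        qbinom ((r : ℤ) + k - (s : ℤ)) (r - t) = 0 := by
  obtain ⟨d, rfl⟩ : ∃ d, r = d + 1 := ⟨r - 1, by omega⟩
  have h := (IsLaurentOfDegree.qbinom_sub (t + k - 1) (t - 1)).mul
    (IsLaurentOfDegree.qbinom_sub (d + 1 + k) (d + 1 - t))
  rw [show t - 1 + (d + 1 - t) = d by omega] at h
  rw [← h.sum_neg_one_pow_mul_qbinom_mul_eq_zero]
  refine sum_congr rfl fun s _ => ?_
  rw [mul_assoc]
  push_cast
  ring_nf

/-- for all integers `r ≥ 1`, `1 ≤ t ≤ r`, and arbitrary `k ∈ ℤ`,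
`Σ_{s=0}^{r} (−1)^s [r ¦ s] [t+k−s−1 ¦ t−1] [r+k−s ¦ r−t] = 0` in `ℚ(q)`. -/
theorem stmt7 (r t : ℕ) (hr : 1 ≤ r) (ht1 : 1 ≤ t) (htr : t ≤ r) (k : ℤ) :
    ∑ s ∈ Finset.range (r + 1),
      (-1 : K) ^ s * qbinom (r : ℤ) s * qbinom ((t : ℤ) + k - (s : ℤ) - 1) (t - 1) *
        qbinom ((r : ℤ) + k - (s : ℤ)) (r - t) = 0 :=
  stmt7_general r t ht1 htr k
end
end

section
/- With n = 2: for every integer k ≥ 0 and every ℓ ∈ ℕ, the identity (r+k, ℓ) = Σ_{s=1}^{r} (−1)^{s−1} [s+k−1 ¦ s−1] · [r+k ¦ r−s] · (r−s, ℓ+s+k) holds in V_2, i.e. the difference of the two sides lies in R_2. -/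
noncomputable section

open Finset

/-- The tuple `a(i,j)` obtained from `a` by replacing the pair of entries at the
(0-based) positions `i, i+1` by `(a_i − j, a_{i+1} + j)`. -/
def tupleRepl {n : ℕ} (a : Fin n → ℕ) (i : ℕ) (h : i + 1 < n) (j : ℕ) : Fin n → ℕ :=
  fun t =>
    if t = (⟨i, by omega⟩ : Fin n) then a ⟨i, by omega⟩ - j
    else if t = (⟨i + 1, h⟩ : Fin n) then a ⟨i + 1, h⟩ + j
    else a t

/-- The set of spanning elements of the subspace `R_n` of relations:
`Σ_{j=0}^{r} (−1)^j [r ¦ j] · a(i,j)` for `a ∈ ℕ^n` and a position `i` with `a_i ≥ r`. -/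
def relSet (r n : ℕ) : Set ((Fin n → ℕ) →₀ K) :=
  { x | ∃ (a : Fin n → ℕ) (i : ℕ) (h : i + 1 < n), r ≤ a ⟨i, by omega⟩ ∧
      x = ∑ j ∈ Finset.range (r + 1),
            ((-1 : K) ^ j * qbinom (r : ℤ) j) • Finsupp.single (tupleRepl a i h j) (1 : K) }

lemma q_pow_ne_one {m : ℕ} (hm : m ≠ 0) : q ^ m ≠ 1 := by
  rw [q, ← RatFunc.algebraMap_X, ← map_pow, ← map_one (algebraMap (Polynomial ℚ) K), Ne,
    (RatFunc.algebraMap_injective ℚ).eq_iff]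
  intro h
  simpa [hm] using congrArg Polynomial.natDegree h

lemma qint_natCast_ne_zero {n : ℕ} (hn : n ≠ 0) : qint n ≠ 0 := by
  have numerator_ne_zero : ∀ m : ℕ, m ≠ 0 → q ^ (m : ℤ) - q ^ (-(m : ℤ)) ≠ 0 := by
    intro m hm h
    apply q_pow_ne_one (m := m + m) (by omega)
    rw [zpow_neg, zpow_natCast, sub_eq_zero] at h
    rw [pow_add]
    field_simp [pow_ne_zero m q_ne_zero] at h ⊢
    exact h
  exact div_ne_zero (numerator_ne_zero n hn) (by simpa using numerator_ne_zero 1 one_ne_zero)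

lemma qint_mul_qint_sub_qint_mul (a b c : ℤ) :
    qint a * qint b - qint c * qint (a + b - c) = qint (a - c) * qint (b - c) := by
  have hq := q_ne_zero
  simp only [qint, zpow_neg, zpow_add₀ hq, zpow_sub₀ hq]
  field_simp
  ring

lemma qfact_succ (m : ℕ) : qfact (m + 1) = qfact m * qint (m + 1) :=
  prod_range_succ _ _

lemma prod_range_qint_sub_mul_qfact {n m : ℕ} (h : m ≤ n) :
    (∏ t ∈ range m, qint (n - t)) * qfact (n - m) = qfact n := by
  obtain ⟨d, rfl⟩ := Nat.exists_eq_add_of_le h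
  rw [qfact, qfact, Nat.add_sub_cancel_left, add_comm m d, prod_range_add, mul_comm,
    ← prod_range_reflect _ m]
  refine congrArg _ (prod_congr rfl fun t ht => ?_)
  have := mem_range.mp ht
  congr 1
  omega

lemma qbinom_eq_qfact_div {n m : ℕ} (h : m ≤ n) :
    qbinom n m = qfact n / (qfact m * qfact (n - m)) := by
  rw [qbinom, ← prod_range_qint_sub_mul_qfact h]
  field_simp [qfact_ne_zero]

lemma qbinom_self (n : ℕ) : qbinom n n = 1 := by
  rw [qbinom_eq_qfact_div le_rfl, Nat.sub_self, show qfact 0 = 1 from prod_range_zero _, mul_one,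
    div_self (qfact_ne_zero n)]

lemma qbinom_symm {n m : ℕ} (h : m ≤ n) : qbinom n m = qbinom n (n - m) := by
  rw [qbinom_eq_qfact_div h, qbinom_eq_qfact_div (n.sub_le m), Nat.sub_sub_self h, mul_comm]

lemma qbinom_partial_sum_step (e b d : ℕ) :
    qbinom (e + b + 2 : ℕ) (e + 1) * qbinom (e + b + d + 2 : ℕ) (d + 1)
      - qbinom (e + d + 1 : ℕ) e * qbinom (e + b + d + 3 : ℕ) (e + d + 2)
      = qbinom (e + d + 1 : ℕ) (e + 1) * qbinom (e + b + d + 2 : ℕ) (e + d + 2) := by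
  rw [qbinom_eq_qfact_div (by omega), qbinom_eq_qfact_div (by omega),
    qbinom_eq_qfact_div (by omega), qbinom_eq_qfact_div (by omega),
    qbinom_eq_qfact_div (by omega), qbinom_eq_qfact_div (by omega)]
  rw [show e + b + 2 - (e + 1) = b + 1 by omega, show e + b + d + 2 - (d + 1) = e + b + 1 by omega,
    show e + d + 1 - e = d + 1 by omega, show e + b + d + 3 - (e + d + 2) = b + 1 by omega,
    show e + d + 1 - (e + 1) = d by omega, show e + b + d + 2 - (e + d + 2) = b by omega]
  rw [show e + b + 2 = (e + b + 1) + 1 by omega, show e + b + d + 3 = (e + b + d + 2) + 1 by omega,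
    show e + d + 2 = (e + d + 1) + 1 by omega]
  rw [qfact_succ (e + b + 1), qfact_succ (e + b + d + 2), qfact_succ (e + d + 1), qfact_succ e,
    qfact_succ d, qfact_succ b]
  have qint_identity : qint (e + b + 2) * qint (e + d + 2) - qint (e + 1) * qint (e + b + d + 3)
      = qint (b + 1) * qint (d + 1) := by
    convert qint_mul_qint_sub_qint_mul (e + b + 2) (e + d + 2) (e + 1) using 4 <;> ring
  have h1 := qint_natCast_ne_zero (n := e + 1) (by omega)
  have h2 := qint_natCast_ne_zero (n := d + 1) (by omega)
  have h3 := qint_natCast_ne_zero (n := b + 1) (by omega)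
  have h4 := qint_natCast_ne_zero (n := e + d + 2) (by omega)
  -- one normal form for the arguments of `qint`, so that `field_simp` sees the cancellations
  push_cast at qint_identity h1 h2 h3 h4 ⊢
  ring_nf at qint_identity h1 h2 h3 h4 ⊢
  field_simp [qfact_ne_zero]
  exact qint_identity

def invCoeff (r m : ℕ) : K := qbinom (r + m - 1 : ℕ) m

def relCoeff (r j : ℕ) : K := (-1) ^ j * qbinom r j

lemma sum_range_invCoeff_mul_relCoeff {r s t : ℕ} (hs : 1 ≤ s) (hsr : s ≤ r) (hst : s ≤ t) :
    ∑ j ∈ range s, invCoeff r (t - j) * relCoeff r j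
      = (-1) ^ (s - 1) * qbinom (t - 1 : ℕ) (s - 1) * qbinom (r + t - s : ℕ) t := by
  induction s, hs using Nat.le_induction with
  | base => simp [invCoeff, relCoeff, qbinom_zero]
  | succ s hs ih =>
    obtain ⟨e, rfl⟩ : ∃ e, s = e + 1 := ⟨s - 1, by omega⟩
    obtain ⟨b, rfl⟩ : ∃ b, r = e + b + 2 := ⟨r - (e + 2), by omega⟩
    obtain ⟨d, rfl⟩ : ∃ d, t = e + d + 2 := ⟨t - (e + 2), by omega⟩
    rw [sum_range_succ, ih (by omega) (by omega), invCoeff, relCoeff,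
      show e + d + 2 - 1 = e + d + 1 by omega,
      show e + b + 2 + (e + d + 2) - (e + 1) = e + b + d + 3 by omega,
      show e + b + 2 + (e + d + 2 - (e + 1)) - 1 = e + b + d + 2 by omega,
      show e + d + 2 - (e + 1) = d + 1 by omega,
      show e + b + 2 + (e + d + 2) - (e + 1 + 1) = e + b + d + 2 by omega,
      Nat.add_sub_cancel, Nat.add_sub_cancel]
    linear_combination (-1) ^ (e + 1) * qbinom_partial_sum_step e b d

lemma sum_range_invCoeff_mul_relCoeff_eq_zero {r t : ℕ} (hr : 1 ≤ r) (ht : 1 ≤ t) :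
    ∑ j ∈ range (min t r + 1), invCoeff r (t - j) * relCoeff r j = 0 := by
  obtain ⟨t, rfl⟩ : ∃ t', t = t' + 1 := ⟨t - 1, by omega⟩
  obtain ⟨r, rfl⟩ : ∃ r', r = r' + 1 := ⟨r - 1, by omega⟩
  rcases le_or_gt t r with h | h
  · rw [min_eq_left (by omega), sum_range_succ,
      sum_range_invCoeff_mul_relCoeff (by omega) (by omega) le_rfl, invCoeff, relCoeff,
      Nat.sub_self, Nat.add_sub_cancel, qbinom_self, Nat.add_sub_cancel, qbinom_zero]
    ring
  · rw [min_eq_right (by omega), sum_range_succ,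
      sum_range_invCoeff_mul_relCoeff (by omega) le_rfl (by omega), invCoeff, relCoeff,
      qbinom_self, Nat.add_sub_cancel, Nat.add_sub_cancel, Nat.add_sub_cancel_left, qbinom_self,
      qbinom_symm (show r ≤ t by omega), show r + 1 + (t + 1 - (r + 1)) - 1 = t by omega,
      show t + 1 - (r + 1) = t - r by omega]
    ring

lemma sum_range_sum_range_smul_add {R M : Type*} [Semiring R] [AddCommMonoid M] [Module R M]
    (f g : ℕ → R) (v : ℕ → M) (k r : ℕ) :
    ∑ m ∈ range (k + 1), ∑ j ∈ range (r + 1), (f m * g j) • v (m + j)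
      = ∑ t ∈ range (k + r + 1),
          (∑ j ∈ range (r + 1) with j ≤ t ∧ t ≤ k + j, f (t - j) * g j) • v t := by
  simp_rw [sum_smul, sum_filter]
  rw [sum_comm, sum_comm (s := range (k + r + 1))]
  refine sum_congr rfl fun j hj => ?_
  replace hj := mem_range.mp hj
  rw [← sum_filter]
  refine sum_nbij' (· + j) (· - j) ?_ ?_ ?_ ?_ ?_ <;> intro t ht <;>
    simp only [mem_filter, mem_range, Nat.add_sub_cancel] at ht ⊢ <;> omega

def convCoeff (r k t : ℕ) : K :=
  ∑ j ∈ range (r + 1) with j ≤ t ∧ t ≤ k + j, invCoeff r (t - j) * relCoeff r j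

lemma convCoeff_zero (r k : ℕ) : convCoeff r k 0 = 1 := by
  rw [convCoeff, sum_eq_single 0]
  · simp [invCoeff, relCoeff, qbinom_zero]
  · intro j hj hj0
    simp only [mem_filter] at hj
    omega
  · simp

lemma convCoeff_eq_zero {r k t : ℕ} (hr : 1 ≤ r) (ht : 1 ≤ t) (htk : t ≤ k) :
    convCoeff r k t = 0 := by
  rw [convCoeff, show {j ∈ range (r + 1) | j ≤ t ∧ t ≤ k + j} = range (min t r + 1) by
    ext j; simp only [mem_filter, mem_range]; omega]
  exact sum_range_invCoeff_mul_relCoeff_eq_zero hr ht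

lemma convCoeff_add {r k s : ℕ} (hs : 1 ≤ s) (hsr : s ≤ r) :
    convCoeff r k (k + s) = -((-1) ^ (s - 1) * qbinom ((s : ℤ) + (k : ℤ) - 1) (s - 1) *
      qbinom ((r : ℤ) + (k : ℤ)) (r - s)) := by
  rw [convCoeff, show {j ∈ range (r + 1) | j ≤ k + s ∧ k + s ≤ k + j}
      = Ico s (min (k + s) r + 1) by ext j; simp only [mem_filter, mem_range, mem_Ico]; omega,
    sum_Ico_eq_sub _ (by omega), sum_range_invCoeff_mul_relCoeff_eq_zero (by omega) (by omega),
    sum_range_invCoeff_mul_relCoeff hs hsr (by omega), zero_sub,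
    show r + (k + s) - s = r + k by omega, qbinom_symm (show k + s ≤ r + k by omega),
    show r + k - (k + s) = r - s by omega, show ((k + s - 1 : ℕ) : ℤ) = s + k - 1 by omega,
    Nat.cast_add]

lemma tupleRepl_pair (x y j : ℕ) (h : 0 + 1 < 2) : tupleRepl ![x, y] 0 h j = ![x - j, y + j] := by
  funext t
  fin_cases t <;> simp [tupleRepl]

lemma relation_mem_span_relSet {r x : ℕ} (y : ℕ) (hx : r ≤ x) :
    ∑ j ∈ range (r + 1), relCoeff r j • Finsupp.single ![x - j, y + j] (1 : K)
      ∈ Submodule.span K (relSet r 2) := by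
  refine Submodule.subset_span ⟨![x, y], 0, by norm_num, by simpa using hx, ?_⟩
  simp only [tupleRepl_pair, relCoeff]

lemma sum_invCoeff_smul_relation {r : ℕ} (hr : 1 ≤ r) (k l : ℕ) :
    ∑ m ∈ range (k + 1), invCoeff r m • ∑ j ∈ range (r + 1),
        relCoeff r j • Finsupp.single ![r + k - m - j, l + m + j] (1 : K)
      = Finsupp.single ![r + k, l] 1 - ∑ s ∈ Icc 1 r,
          ((-1) ^ (s - 1) * qbinom ((s : ℤ) + (k : ℤ) - 1) (s - 1) *
            qbinom ((r : ℤ) + (k : ℤ)) (r - s)) •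
          Finsupp.single ![r - s, l + s + k] 1 := by
  set v : ℕ → (Fin 2 → ℕ) →₀ K := fun t => Finsupp.single ![r + k - t, l + t] 1
  have h_low : ∑ t ∈ range (k + 1), convCoeff r k t • v t = Finsupp.single ![r + k, l] 1 := by
    rw [sum_eq_single 0]
    · simp [v, convCoeff_zero]
    · intro t ht ht0
      rw [convCoeff_eq_zero hr (by omega) (by rw [mem_range] at ht; omega), zero_smul]
    · simp
  have h_high : ∑ t ∈ Ico (k + 1) (k + r + 1), convCoeff r k t • v t
      = -∑ s ∈ Icc 1 r, ((-1) ^ (s - 1) * qbinom ((s : ℤ) + (k : ℤ) - 1) (s - 1) *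
            qbinom ((r : ℤ) + (k : ℤ)) (r - s)) • Finsupp.single ![r - s, l + s + k] 1 := by
    rw [← Ico_add_one_right_eq_Icc, ← sum_neg_distrib, show k + 1 = 1 + k by ring,
      show k + r + 1 = r + 1 + k by ring, ← sum_Ico_add']
    refine sum_congr rfl fun s hs => ?_
    rw [mem_Ico] at hs
    rw [add_comm s k, convCoeff_add (by omega) (by omega), neg_smul]
    simp only [v, show r + k - (k + s) = r - s by omega, show l + (k + s) = l + s + k by omega]
  calc _ = ∑ m ∈ range (k + 1), ∑ j ∈ range (r + 1),
          (invCoeff r m * relCoeff r j) • v (m + j) := by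
        simp only [smul_sum, smul_smul, v, Nat.sub_sub, add_assoc]
    _ = ∑ t ∈ range (k + r + 1), convCoeff r k t • v t :=
        sum_range_sum_range_smul_add _ _ _ k r
    _ = _ := by
      rw [range_eq_Ico, ← sum_Ico_consecutive _ (Nat.zero_le (k + 1)) (by omega),
        ← range_eq_Ico, h_low, h_high, sub_eq_add_neg]

/-- n = 2: for every `k ≥ 0` and `ℓ ∈ ℕ`,
`(r+k, ℓ) = Σ_{s=1}^{r} (−1)^{s−1} [s+k−1 ¦ s−1] [r+k ¦ r−s] (r−s, ℓ+s+k)` holds in `V_2`,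
i.e. the difference of the two sides lies in `R_2`. -/
theorem stmt8 (r : ℕ) (hr : 2 ≤ r) (k l : ℕ) :
    Finsupp.single (![r + k, l] : Fin 2 → ℕ) (1 : K)
      - ∑ s ∈ Finset.Icc 1 r,
          ((-1 : K) ^ (s - 1) * qbinom ((s : ℤ) + (k : ℤ) - 1) (s - 1) *
            qbinom ((r : ℤ) + (k : ℤ)) (r - s)) •
          Finsupp.single (![r - s, l + s + k] : Fin 2 → ℕ) (1 : K)
      ∈ Submodule.span K (relSet r 2) := by
  rw [← sum_invCoeff_smul_relation (by omega)]
  refine Submodule.sum_mem _ fun m hm => Submodule.smul_mem _ _ ?_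
  exact relation_mem_span_relSet (l + m) (by rw [mem_range] at hm; omega)
end
end
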